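/- arXiv:1705.00843 — 14 statements merged into one kernel-verified Lean document; each statement's English description precedes it below -/
import Mathlib

section
/- Suppose u : ℤ × ℤ → K and U : ℤ × ℤ → K satisfy, for all n, m: u(n+1,m) + u(n,m) + p = U(n,m)·U(n+1,m) and u(n,m+1) + u(n,m) + q = U(n,m)·U(n,m+1), with U never zero. Then U satisfies the H1-type equation (U(n,m) - U(n+1,m+1))(U(n+1,m) - U(n,m+1)) = 2p - 2q for all n, m. -/
/-- The BT ũ + u + p = UŨ, û + u + q = UÛ between H2 and H1(2p,2q):
compatibility forces U to satisfy (U − ÛŨ)(Ũ − Û) = 2p − 2q. -/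
theorem stmt_4 {K : Type*} [Field K] (p q : K) (u U : ℤ → ℤ → K)
    (hU : ∀ n m : ℤ, U n m ≠ 0)
    (h1 : ∀ n m : ℤ, u (n + 1) m + u n m + p = U n m * U (n + 1) m)
    (h2 : ∀ n m : ℤ, u n (m + 1) + u n m + q = U n m * U n (m + 1)) :
    ∀ n m : ℤ,
      (U n m - U (n + 1) (m + 1)) * (U (n + 1) m - U n (m + 1)) = 2 * p - 2 * q := by
  intro n m
  linear_combination (h2 (n+1) m - h1 n (m+1)) + (h2 n m - h1 n m)
end

section
/- Suppose u, U : ℤ × ℤ → K satisfy, for all n, m: u(n+1,m) - u(n,m) = p·U(n,m)·U(n+1,m) and u(n,m+1) - u(n,m) = q·U(n,m)·U(n,m+1), with p, q nonzero and U never zero. Then U satisfies the lattice potential modified KdV equation p(U(n,m)U(n+1,m) - U(n,m+1)U(n+1,m+1)) - q(U(n,m)U(n,m+1) - U(n+1,m)U(n+1,m+1)) = 0 for all n, m. -/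
/-- The BT ũ − u = pUŨ, û − u = qUÛ between Q1(0;p²,q²) and the lpmKdV equation:
compatibility forces U to satisfy lpmKdV. -/
theorem stmt_5 {K : Type*} [Field K] (p q : K) (hp : p ≠ 0) (hq : q ≠ 0)
    (u U : ℤ → ℤ → K) (hU : ∀ n m : ℤ, U n m ≠ 0)
    (h1 : ∀ n m : ℤ, u (n + 1) m - u n m = p * U n m * U (n + 1) m)
    (h2 : ∀ n m : ℤ, u n (m + 1) - u n m = q * U n m * U n (m + 1)) :
    ∀ n m : ℤ,
      p * (U n m * U (n + 1) m - U n (m + 1) * U (n + 1) (m + 1))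
        - q * (U n m * U n (m + 1) - U (n + 1) m * U (n + 1) (m + 1)) = 0 := by
  intro n m
  have a := h1 n m
  have b := h2 (n + 1) m
  have c := h2 n m
  have d := h1 n (m + 1)
  linear_combination c + d - a - b
end

section
/- Suppose u, U : ℤ × ℤ → K satisfy, for all n, m: u(n+1,m)·u(n,m) + δp = U(n,m)·U(n+1,m) and u(n,m+1)·u(n,m) + δq = U(n,m)·U(n,m+1), where u and U are never zero. Then U satisfies H3(-δ): p(U(n,m)U(n+1,m) + U(n,m+1)U(n+1,m+1)) - q(U(n,m)U(n,m+1) + U(n+1,m)U(n+1,m+1)) - δ(p² - q²) = 0 for all n, m, provided u satisfies H3(δ). -/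
/-- The BT uũ + δp = UŨ, uû + δq = UÛ between H3(δ) and H3(−δ):
if u solves H3(δ) then U solves H3(−δ). -/
theorem stmt_6 {K : Type*} [Field K] (p q δ : K) (u U : ℤ → ℤ → K)
    (hu : ∀ n m : ℤ, u n m ≠ 0) (hU : ∀ n m : ℤ, U n m ≠ 0)
    (h1 : ∀ n m : ℤ, u (n + 1) m * u n m + δ * p = U n m * U (n + 1) m)
    (h2 : ∀ n m : ℤ, u n (m + 1) * u n m + δ * q = U n m * U n (m + 1))
    (hH3 : ∀ n m : ℤ,
      p * (u n m * u (n + 1) m + u n (m + 1) * u (n + 1) (m + 1))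
        - q * (u n m * u n (m + 1) + u (n + 1) m * u (n + 1) (m + 1))
        + δ * (p ^ 2 - q ^ 2) = 0) :
    ∀ n m : ℤ,
      p * (U n m * U (n + 1) m + U n (m + 1) * U (n + 1) (m + 1))
        - q * (U n m * U n (m + 1) + U (n + 1) m * U (n + 1) (m + 1))
        - δ * (p ^ 2 - q ^ 2) = 0 := by
  intro n m
  linear_combination -p * (h1 n m) - p * (h1 n (m + 1)) + q * (h2 n m) + q * (h2 (n + 1) m) + hH3 n m
end

section
/- For any functions u, ū : ℤ × ℤ → K satisfying the coupled system (ū(n+1,m) - ū(n,m))(u(n+1,m) - u(n,m)) + p²·ū(n,m)·ū(n+1,m) = 0 and (ū(n,m+1) - ū(n,m))(u(n,m+1) - u(n,m)) + q²·ū(n,m)·ū(n,m+1) = 0 for all n,m, with all factors (u shifted minus u) and ū nonzero: if u satisfies Q1(0), i.e. p²(u - û)(ũ - ûũ) = q²(u - ũ)(û - ûũ), then ū also satisfies Q1(0) with the same parameters. -/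
/-- The coupled system (ũ̄ − ū)(ũ − u) + p²ū ũ̄ = 0, (û̄ − ū)(û − u) + q²ū û̄ = 0
is an auto-Bäcklund transformation of Q1(0) with parameters p², q². -/
theorem stmt_7 {K : Type*} [Field K] (p q : K) (u ub : ℤ → ℤ → K)
    (hb : ∀ n m : ℤ, ub n m ≠ 0)
    (hdn : ∀ n m : ℤ, u (n + 1) m - u n m ≠ 0)
    (hdm : ∀ n m : ℤ, u n (m + 1) - u n m ≠ 0)
    (h1 : ∀ n m : ℤ,
      (ub (n + 1) m - ub n m) * (u (n + 1) m - u n m) + p ^ 2 * ub n m * ub (n + 1) m = 0)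
    (h2 : ∀ n m : ℤ,
      (ub n (m + 1) - ub n m) * (u n (m + 1) - u n m) + q ^ 2 * ub n m * ub n (m + 1) = 0)
    (hQ : ∀ n m : ℤ,
      p ^ 2 * (u n m - u n (m + 1)) * (u (n + 1) m - u (n + 1) (m + 1)) =
        q ^ 2 * (u n m - u (n + 1) m) * (u n (m + 1) - u (n + 1) (m + 1))) :
    ∀ n m : ℤ,
      p ^ 2 * (ub n m - ub n (m + 1)) * (ub (n + 1) m - ub (n + 1) (m + 1)) =
        q ^ 2 * (ub n m - ub (n + 1) m) * (ub n (m + 1) - ub (n + 1) (m + 1)) := by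
  intro n m
  set a := u n m
  set b := u (n + 1) m
  set c := u n (m + 1)
  set d := u (n + 1) (m + 1)
  set A := ub n m
  set B := ub (n + 1) m
  set C := ub n (m + 1)
  set D := ub (n + 1) (m + 1)
  have e1 := h1 n m
  have e2 := h1 n (m + 1)
  have e3 := h2 n m
  have e4 := h2 (n + 1) m
  have eQ := hQ n m
  have hX : (b - a) * ((c - a) * ((d - b) * (d - c))) ≠ 0 :=
    mul_ne_zero (hdn n m) (mul_ne_zero (hdm n m)
      (mul_ne_zero (hdm (n + 1) m) (hdn n (m + 1))))
  apply mul_right_cancel₀ hX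
  -- k1 : (A−C)(c−a) = q²AC, k2 : (B−D)(d−b) = q²BD,
  -- k3 : (A−B)(b−a) = p²AB, k4 : (C−D)(d−c) = p²CD
  have k1 : (A - C) * (c - a) = q ^ 2 * A * C := by linear_combination -e3
  have k2 : (B - D) * (d - b) = q ^ 2 * B * D := by linear_combination -e4
  have k3 : (A - B) * (b - a) = p ^ 2 * A * B := by linear_combination -e1
  have k4 : (C - D) * (d - c) = p ^ 2 * C * D := by linear_combination -e2
  linear_combination (p ^ 2 * (B - D) * (d - b) * (b - a) * (d - c)) * k1 +
    (p ^ 2 * q ^ 2 * A * C * (b - a) * (d - c)) * k2 -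
    (q ^ 2 * (C - D) * (d - c) * (c - a) * (d - b)) * k3 -
    (q ^ 2 * p ^ 2 * A * B * (c - a) * (d - b)) * k4 -
    (p ^ 2 * q ^ 2 * A * B * C * D) * eQ
end

section
/- Let p, q, r be nonzero with p² ≠ q², q² ≠ r², p² ≠ r². Given generic initial values u, ũ, û, ū, define ũû from Q1(0) on the bottom face, ũū from the p-r side equation (ũū - ū)(ũ - u) + p²ū·ũū = 0, ûū from the q-r side equation, and then compute ũûū in three ways: from the back face equation (with shift in n), from the right face equation (with shift in m), and from the top Q1(0) equation in ū. All three computed values of ũûū coincide. -/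
/-!
Each side equation and the top equation are linear in the new value, so the claim is that these
linear equations are proportional. The two side equations at `u` combine to
`(ũ - u)(û - u)(ũ̄ - û̄) = ũ̄ û̄ (q²(ũ - u) - p²(û - u))` (up to a factor `ū`), and with this the
proportionality of the right-face and top-face equations reduces to Q1(0) on the bottom. The
whole system is symmetric under `(p, ũ, ũ̄) ↔ (q, û, û̄)`, which gives the back face as well.
-/

section

variable {K : Type*} [Field K]

/-- Q1(0) on the quadrilateral `x = u, x₁ = ũ, x₂ = û, x₁₂ = ũû`. -/
def Q1Zero (p q x x₁ x₂ x₁₂ : K) : Prop :=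
  p ^ 2 * (x - x₂) * (x₁ - x₁₂) = q ^ 2 * (x - x₁) * (x₂ - x₁₂)

/-- The side equation of the cube over the edge `x → x'`, with `y, y'` the values above them. -/
def AutoBT (c x x' y y' : K) : Prop :=
  (y' - y) * (x' - x) + c ^ 2 * y * y' = 0

theorem eq_of_mul_eq_of_mul_eq {a₁ a₂ b₁ b₂ w₁ w₂ : K} (h₁ : w₁ * a₁ = b₁) (h₂ : w₂ * a₂ = b₂)
    (ha₁ : a₁ ≠ 0) (ha₂ : a₂ ≠ 0) (h : b₁ * a₂ = b₂ * a₁) : w₁ = w₂ := by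
  rw [(eq_div_iff ha₁).mpr h₁, (eq_div_iff ha₂).mpr h₂, div_eq_div_iff ha₁ ha₂, h]

theorem Q1Zero.mul_eq {p q x x₁ x₂ x₁₂ : K} (h : Q1Zero p q x x₁ x₂ x₁₂) :
    x₁₂ * (p ^ 2 * (x - x₂) - q ^ 2 * (x - x₁)) = p ^ 2 * (x - x₂) * x₁ - q ^ 2 * (x - x₁) * x₂ := by
  unfold Q1Zero at h
  linear_combination -h

theorem AutoBT.mul_eq {c x x' y y' : K} (h : AutoBT c x x' y y') :
    y' * (x' - x + c ^ 2 * y) = y * (x' - x) := by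
  unfold AutoBT at h
  linear_combination h

theorem AutoBT.mul_sub_mul {p q x x₁ x₂ y y₁ y₂ : K} (h₁ : AutoBT p x x₁ y y₁)
    (h₂ : AutoBT q x x₂ y y₂) :
    y * ((x₁ - x) * (x₂ - x) * (y₁ - y₂)) = y * (y₁ * y₂ * (q ^ 2 * (x₁ - x) - p ^ 2 * (x₂ - x))) := by
  unfold AutoBT at h₁ h₂
  linear_combination (y₂ * (x₂ - x)) * h₁ - (y₁ * (x₁ - x)) * h₂

theorem AutoBT.eq_of_Q1Zero {p q x x₁ x₂ x₁₂ y y₁ y₂ w w' : K}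
    (hx₁ : x₁ - x ≠ 0) (hx₂ : x₂ - x ≠ 0) (hbot : Q1Zero p q x x₁ x₂ x₁₂)
    (h₁ : AutoBT p x x₁ y y₁) (h₂ : AutoBT q x x₂ y y₂)
    (hw : AutoBT p x₂ x₁₂ y₂ w) (htop : Q1Zero p q y y₁ y₂ w')
    (hw_ne : x₁₂ - x₂ + p ^ 2 * y₂ ≠ 0) (hw'_ne : p ^ 2 * (y - y₂) ≠ q ^ 2 * (y - y₁)) :
    w = w' := by
  refine eq_of_mul_eq_of_mul_eq hw.mul_eq htop.mul_eq hw_ne (sub_ne_zero.mpr hw'_ne) ?_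
  have hS := h₁.mul_sub_mul h₂
  unfold AutoBT at h₁ h₂
  unfold Q1Zero at hbot
  have hA : (x₁ - x) * (x₂ - x) * (p ^ 2 * (y - y₂) - q ^ 2 * (y - y₁))
      = p ^ 2 * q ^ 2 * y * ((x₁ - x) * y₂ - (x₂ - x) * y₁) := by
    linear_combination (q ^ 2 * (x₂ - x)) * h₁ - (p ^ 2 * (x₁ - x)) * h₂
  have hB : (x₁ - x) * (x₂ - x) * (p ^ 2 * (y - y₂) * y₁ - q ^ 2 * (y - y₁) * y₂)
      = p ^ 2 * q ^ 2 * y * y₁ * y₂ * ((x₁ - x) - (x₂ - x)) := by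
    linear_combination (q ^ 2 * (x₂ - x) * y₂) * h₁ - (p ^ 2 * (x₁ - x) * y₁) * h₂
  -- after clearing `(x₁ - x) (x₂ - x)²` only the side relations and Q1(0) on the bottom are left
  refine mul_left_cancel₀ (mul_ne_zero hx₁ (pow_ne_zero 2 hx₂)) ?_
  linear_combination ((x₂ - x) * y₂ * (x₁₂ - x₂)) * hA - ((x₂ - x) * (x₁₂ - x₂ + p ^ 2 * y₂)) * hB
    - (p ^ 2 * q ^ 2 * y₂ * (x₁₂ - x₂)) * hS + (p ^ 2 * q ^ 2 * y * y₁ * y₂ ^ 2) * hbot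

end

theorem stmt_8_general {K : Type*} [Field K] (p q : K)
    (u ut uh ub uth utb uhb w1 w2 w3 : K)
    -- genericity of the initial data
    (hgen1 : ut - u ≠ 0) (hgen2 : uh - u ≠ 0)
    -- the defining linear equations for w1, w2, w3 are nondegenerate
    (hnd1 : (uth - ut) + q ^ 2 * utb ≠ 0)
    (hnd2 : (uth - uh) + p ^ 2 * uhb ≠ 0)
    (hnd3 : p ^ 2 * (ub - uhb) - q ^ 2 * (ub - utb) ≠ 0)
    -- bottom face: Q1(0) determines uth
    (hbot : p ^ 2 * (u - uh) * (ut - uth) = q ^ 2 * (u - ut) * (uh - uth))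
    -- side faces: the p- and q-direction BT equations determine utb and uhb
    (hside1 : (utb - ub) * (ut - u) + p ^ 2 * ub * utb = 0)
    (hside2 : (uhb - ub) * (uh - u) + q ^ 2 * ub * uhb = 0)
    -- back face (shift in n): determines w1
    (hback : (w1 - utb) * (uth - ut) + q ^ 2 * utb * w1 = 0)
    -- right face (shift in m): determines w2
    (hright : (w2 - uhb) * (uth - uh) + p ^ 2 * uhb * w2 = 0)
    -- top face: Q1(0) in the barred variables determines w3
    (htop : p ^ 2 * (ub - uhb) * (utb - w3) = q ^ 2 * (ub - utb) * (uhb - w3)) :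
    w1 = w2 ∧ w2 = w3 := by
  have hw1 : w1 = w3 := AutoBT.eq_of_Q1Zero hgen2 hgen1 hbot.symm hside2 hside1 hback htop.symm
    hnd1 (sub_ne_zero.mp hnd3).symm
  have hw2 : w2 = w3 := AutoBT.eq_of_Q1Zero hgen1 hgen2 hbot hside1 hside2 hright htop
    hnd2 (sub_ne_zero.mp hnd3)
  exact ⟨hw1.trans hw2.symm, hw2⟩

/-- Consistency around the cube for Q1(0) on the bottom/top faces together with the
auto-BT (x̄' − x̄)(x' − x) + c² x̄ x̄' = 0 on the side faces: the three ways of computing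
the value ũ̂̄ (back face, right face, top face) coincide. -/
theorem stmt_8 {K : Type*} [Field K] (p q r : K)
    (hp : p ≠ 0) (hq : q ≠ 0) (hr : r ≠ 0)
    (hpq : p ^ 2 ≠ q ^ 2) (hqr : q ^ 2 ≠ r ^ 2) (hpr : p ^ 2 ≠ r ^ 2)
    (u ut uh ub uth utb uhb w1 w2 w3 : K)
    -- genericity of the initial data
    (hgen1 : ut - u ≠ 0) (hgen2 : uh - u ≠ 0) (hgen3 : ub ≠ 0)
    (hgen4 : utb ≠ 0) (hgen5 : uhb ≠ 0)
    -- the defining linear equations for w1, w2, w3 are nondegenerate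
    (hnd1 : (uth - ut) + q ^ 2 * utb ≠ 0)
    (hnd2 : (uth - uh) + p ^ 2 * uhb ≠ 0)
    (hnd3 : p ^ 2 * (ub - uhb) - q ^ 2 * (ub - utb) ≠ 0)
    -- bottom face: Q1(0) determines uth
    (hbot : p ^ 2 * (u - uh) * (ut - uth) = q ^ 2 * (u - ut) * (uh - uth))
    -- side faces: the p- and q-direction BT equations determine utb and uhb
    (hside1 : (utb - ub) * (ut - u) + p ^ 2 * ub * utb = 0)
    (hside2 : (uhb - ub) * (uh - u) + q ^ 2 * ub * uhb = 0)
    -- back face (shift in n): determines w1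
    (hback : (w1 - utb) * (uth - ut) + q ^ 2 * utb * w1 = 0)
    -- right face (shift in m): determines w2
    (hright : (w2 - uhb) * (uth - uh) + p ^ 2 * uhb * w2 = 0)
    -- top face: Q1(0) in the barred variables determines w3
    (htop : p ^ 2 * (ub - uhb) * (utb - w3) = q ^ 2 * (ub - utb) * (uhb - w3)) :
    w1 = w2 ∧ w2 = w3 :=
  stmt_8_general p q u ut uh ub uth utb uhb w1 w2 w3 hgen1 hgen2 hnd1 hnd2 hnd3 hbot hside1 hside2
    hback hright htop
end

section
/- Let u, U : ℤ × ℤ → K satisfy (u(n+1,m) - u(n,m))² - δ²p² = p·U(n,m)·U(n+1,m) and (u(n,m+1) - u(n,m))² - δ²q² = q·U(n,m)·U(n,m+1) for all n,m, with p, q nonzero. If u satisfies Q1(δ) with parameters p, q, i.e. p(u-û)(ũ-ûũ) - q(u-ũ)(û-ûũ) + δ²pq(p-q) = 0, then U satisfies the multi-quadratic equation [p(UŨ - ÛÛŨ) - q(UÛ - ŨÛŨ)]² + 4pq(Ũ - Û)[δ²(p-q)(U - ÛŨ) - U·ÛŨ·(Ũ - Û)] = 0, where Ũ = U(n+1,m),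 Û = U(n,m+1), ÛŨ = U(n+1,m+1). -/
/-- The BT (ũ − u)² − δ²p² = pUŨ, (û − u)² − δ²q² = qUÛ between Q1(δ) and the
multi-quadratic equation H3*(δ): if u solves Q1(δ) then U solves the U-equation. -/
theorem stmt_9 {K : Type*} [Field K] [CharZero K] (p q δ : K)
    (hp : p ≠ 0) (hq : q ≠ 0) (u U : ℤ → ℤ → K)
    (h1 : ∀ n m : ℤ, (u (n + 1) m - u n m) ^ 2 - δ ^ 2 * p ^ 2 = p * U n m * U (n + 1) m)
    (h2 : ∀ n m : ℤ, (u n (m + 1) - u n m) ^ 2 - δ ^ 2 * q ^ 2 = q * U n m * U n (m + 1))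
    (hQ1 : ∀ n m : ℤ,
      p * (u n m - u n (m + 1)) * (u (n + 1) m - u (n + 1) (m + 1))
        - q * (u n m - u (n + 1) m) * (u n (m + 1) - u (n + 1) (m + 1))
        + δ ^ 2 * p * q * (p - q) = 0) :
    ∀ n m : ℤ,
      (p * (U n m * U (n + 1) m - U n (m + 1) * U (n + 1) (m + 1))
          - q * (U n m * U n (m + 1) - U (n + 1) m * U (n + 1) (m + 1))) ^ 2
        + 4 * p * q * (U (n + 1) m - U n (m + 1)) *
            (δ ^ 2 * (p - q) * (U n m - U (n + 1) (m + 1))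
              - U n m * U (n + 1) (m + 1) * (U (n + 1) m - U n (m + 1))) = 0 := by
  intro n m
  have key : p * ((p * (U n m * U (n + 1) m - U n (m + 1) * U (n + 1) (m + 1))
          - q * (U n m * U n (m + 1) - U (n + 1) m * U (n + 1) (m + 1))) ^ 2
        + 4 * p * q * (U (n + 1) m - U n (m + 1)) *
            (δ ^ 2 * (p - q) * (U n m - U (n + 1) (m + 1))
              - U n m * U (n + 1) (m + 1) * (U (n + 1) m - U n (m + 1)))) = 0 := by
    linear_combination
      ((4)*p*q^2*δ^2 + (-4)*p^2*q*δ^2 + (-8)*(U n (m+1))*(U (n+1) (m+1))*p*q + (1)*(U n (m+1))*(U (n+1) (m+1))*p^2 + (3)*(U (n+1) m)*(U (n+1) (m+1))*p*q + (1)*(U n m)*(U n (m+1))*p*q + (-1)*(U n m)*(U (n+1) m)*p^2 + (-2)*(u n (m+1))*(u (n+1) (m+1))*p + (2)*(u n (m+1))^2*p + (2)*(u (n+1) m)*(u (n+1) (m+1))*p + (-2)*(u (n+1) m)^2*p + (-2)*(u n m)*(u n (m+1))*p + (2)*(u n m)*(u (n+1) m)*p) * h1 n m +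
      ((-4)*p^2*q*δ^2 + (-1)*(U n (m+1))*(U (n+1) (m+1))*p^2 + (1)*(U (n+1) m)*(U (n+1) (m+1))*p*q + (-1)*(U n m)*(U n (m+1))*p*q + (1)*(U n m)*(U (n+1) m)*p^2 + (4)*(u (n+1) (m+1))^2*p + (-6)*(u n (m+1))*(u (n+1) (m+1))*p + (2)*(u n (m+1))^2*p + (-2)*(u (n+1) m)*(u (n+1) (m+1))*p + (2)*(u (n+1) m)^2*p + (2)*(u n m)*(u n (m+1))*p + (-2)*(u n m)*(u (n+1) m)*p) * h2 n m +
      ((4)*p*q^2*δ^2 + (4)*p^2*q*δ^2 + (-1)*(U n (m+1))*(U (n+1) (m+1))*p^2 + (1)*(U (n+1) m)*(U (n+1) (m+1))*p*q + (3)*(U n m)*(U n (m+1))*p*q + (1)*(U n m)*(U (n+1) m)*p^2 + (2)*(u n (m+1))*(u (n+1) (m+1))*p + (-2)*(u n (m+1))^2*p + (-2)*(u (n+1) m)*(u (n+1) (m+1))*p + (-8)*(u (n+1) m)^2*q + (2)*(u (n+1) m)^2*p + (2)*(u n m)*(u n (m+1))*p + (16)*(u n m)*(u (n+1) m)*q +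 (-2)*(u n m)*(u (n+1) m)*p + (-8)*(u n m)^2*q) * h1 n (m + 1) +
      ((-4)*p^2*q*δ^2 + (1)*(U n (m+1))*(U (n+1) (m+1))*p^2 + (-1)*(U (n+1) m)*(U (n+1) (m+1))*p*q + (1)*(U n m)*(U n (m+1))*p*q + (-1)*(U n m)*(U (n+1) m)*p^2 + (-2)*(u n (m+1))*(u (n+1) (m+1))*p + (2)*(u n (m+1))^2*p + (2)*(u (n+1) m)*(u (n+1) (m+1))*p + (2)*(u (n+1) m)^2*p + (-2)*(u n m)*(u n (m+1))*p + (-6)*(u n m)*(u (n+1) m)*p + (4)*(u n m)^2*p) * h2 (n + 1) m +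
      ((8)*p*q*δ^2 + (-8)*(u (n+1) m)*(u (n+1) (m+1)) + (8)*(u (n+1) m)*(u n (m+1)) + (8)*(u n m)*(u (n+1) (m+1)) + (-8)*(u n m)*(u n (m+1))) * hQ1 n m
  exact (mul_eq_zero.mp key).resolve_left hp
end

section
/- Let a, b, γ, γ₀, δ ∈ K with a² ≠ δ², b² ≠ δ², and set p = a², q = b², x(n,m) = a·n + b·m + γ. Then u(n,m) = δ·x(n,m)² + γ₀ satisfies Q1(δ): p(u-û)(ũ-ûũ) - q(u-ũ)(û-ûũ) + δ²pq(p-q) = 0 for all n, m, where ũ = u(n+1,m), û = u(n,m+1), ûũ = u(n+1,m+1). -/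
/-- The quadratic polynomial u(n,m) = δ·x² + γ₀ with x = a·n + b·m + γ solves Q1(δ)
with parameters p = a², q = b². -/
theorem stmt_10 {K : Type*} [Field K] [CharZero K] (a b γ γ₀ δ : K)
    (ha : a ^ 2 ≠ δ ^ 2) (hb : b ^ 2 ≠ δ ^ 2) :
    let p : K := a ^ 2
    let q : K := b ^ 2
    let u : ℤ → ℤ → K := fun n m => δ * (a * (n : K) + b * (m : K) + γ) ^ 2 + γ₀
    ∀ n m : ℤ,
      p * (u n m - u n (m + 1)) * (u (n + 1) m - u (n + 1) (m + 1))
        - q * (u n m - u (n + 1) m) * (u n (m + 1) - u (n + 1) (m + 1))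
        + δ ^ 2 * p * q * (p - q) = 0 := by
  intro p q u n m
  simp only [p, q, u]
  push_cast
  ring
end

section
/- Let a, b, γ, γ₀ ∈ K, c₀ ≠ 0, δ ∈ K, p = a², q = b², x(n,m) = a·n + b·m + γ. Then u(n,m) = (c₀/3)x³ - (δ²/c₀)x - (c₀/3)(a³n + b³m) + γ₀ satisfies Q1(δ) with parameters p, q for all n, m. -/
/-- The cubic polynomial u = (c₀/3)x³ − (δ²/c₀)x − (c₀/3)(a³n + b³m) + γ₀ with
x = a·n + b·m + γ solves Q1(δ) with parameters p = a², q = b². -/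
theorem stmt_11 {K : Type*} [Field K] [CharZero K] (a b γ γ₀ δ c₀ : K) (hc : c₀ ≠ 0) :
    let p : K := a ^ 2
    let q : K := b ^ 2
    let x : ℤ → ℤ → K := fun n m => a * (n : K) + b * (m : K) + γ
    let u : ℤ → ℤ → K := fun n m =>
      (c₀ / 3) * (x n m) ^ 3 - (δ ^ 2 / c₀) * (x n m)
        - (c₀ / 3) * (a ^ 3 * (n : K) + b ^ 3 * (m : K)) + γ₀
    ∀ n m : ℤ,
      p * (u n m - u n (m + 1)) * (u (n + 1) m - u (n + 1) (m + 1))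
        - q * (u n m - u (n + 1) m) * (u n (m + 1) - u (n + 1) (m + 1))
        + δ ^ 2 * p * q * (p - q) = 0 := by
  intro p q x u n m
  simp only [p, q, x, u]
  push_cast
  field_simp
  ring
end

section
/- Let a, b, γ, δ ∈ K, x(n,m) = a·n + b·m + γ, p = a², q = b². Then U(n,m) = x(n,m)² - δ² satisfies, for all n, m, the equation [p(UŨ-ÛÛŨ) - q(UÛ-ŨÛŨ)]² + 4pq(Ũ-Û)[δ²(p-q)(U-ÛŨ) - UÛŨ(Ũ-Û)] = 0 with parameters p = a², q = b². -/
/-- U(n,m) = x² − δ² with x = a·n + b·m + γ solves the multi-quadratic equation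
H3*(δ) in the form [p(UŨ−ÛÛŨ) − q(UÛ−ŨÛŨ)]² + 4pq(Ũ−Û)[δ²(p−q)(U−ÛŨ) − UÛŨ(Ũ−Û)] = 0
with parameters p = a², q = b². -/
theorem stmt_12 {K : Type*} [Field K] [CharZero K] (a b γ δ : K) :
    let p : K := a ^ 2
    let q : K := b ^ 2
    let U : ℤ → ℤ → K := fun n m => (a * (n : K) + b * (m : K) + γ) ^ 2 - δ ^ 2
    ∀ n m : ℤ,
      (p * (U n m * U (n + 1) m - U n (m + 1) * U (n + 1) (m + 1))
          - q * (U n m * U n (m + 1) - U (n + 1) m * U (n + 1) (m + 1))) ^ 2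
        + 4 * p * q * (U (n + 1) m - U n (m + 1)) *
            (δ ^ 2 * (p - q) * (U n m - U (n + 1) (m + 1))
              - U n m * U (n + 1) (m + 1) * (U (n + 1) m - U n (m + 1))) = 0 := by
  intro p q U n m
  simp only [U, p, q]
  push_cast
  ring
end

section
/- Define Q(u₁,u₂,u₃,u₄) as a general affine-linear polynomial in four variables (degree at most 1 in each variable), and for distinct indices i,j,k,l in {1,2,3,4} set h^{ij} = ∂_{u_k}Q · ∂_{u_l}Q - Q · ∂_{u_k}∂_{u_l}Q. Then h^{12}·h^{34} - h^{13}·h^{24} = P·Q, where P is the 3×3 determinant with rows (Q, Q_{u₁}, Q_{u₄}), (Q_{u₂}, Q_{u₁u₂}, Q_{u₂u₄}), (Q_{u₃}, Q_{u₁u₃}, Q_{u₃u₄}). -/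
open MvPolynomial

/-- The fundamental decomposition identity 𝓗 = h¹²h³⁴ − h¹³h²⁴ = P·Q for an arbitrary
affine-linear quadrilateral polynomial Q, where h^{ij} = Q_{u_k}Q_{u_l} − Q·Q_{u_k u_l}
(with {i,j,k,l} = {1,2,3,4}) and P is the 3×3 determinant with rows
(Q, Q_{u₁}, Q_{u₄}), (Q_{u₂}, Q_{u₁u₂}, Q_{u₂u₄}), (Q_{u₃}, Q_{u₁u₃}, Q_{u₃u₄}). -/
theorem stmt_13 {K : Type*} [Field K] [CharZero K] (Q : MvPolynomial (Fin 4) K)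
    (hQ : ∀ i : Fin 4, Q.degreeOf i ≤ 1) :
    let d : Fin 4 → MvPolynomial (Fin 4) K := fun i => pderiv i Q
    let dd : Fin 4 → Fin 4 → MvPolynomial (Fin 4) K := fun i j => pderiv i (pderiv j Q)
    -- h k l is the biquadratic h^{ij} where {k,l} is the complement of {i,j}
    let h : Fin 4 → Fin 4 → MvPolynomial (Fin 4) K := fun k l => d k * d l - Q * dd k l
    let P : MvPolynomial (Fin 4) K :=
      Matrix.det !![Q, d 0, d 3; d 1, dd 0 1, dd 1 3; d 2, dd 0 2, dd 2 3]
    -- h¹² = h 2 3, h³⁴ = h 0 1, h¹³ = h 1 3, h²⁴ = h 0 2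
    h 2 3 * h 0 1 - h 1 3 * h 0 2 = P * Q := by
  intro d dd h P
  simp only [d, dd, h, P]
  simp [Matrix.det_fin_three]
  ring
end

section
/- Let u : ℤ × ℤ → K satisfy the linear equation u(n,m) - u(n+1,m) - u(n,m+1) + u(n+1,m+1) = 0 for all n, m (with all differences u(n+1,m)-u(n,m) and u(n,m+1)-u(n,m) nonzero). Then the 2×2 matrix system Φ(n+1,m) = L·Φ(n,m), Φ(n,m+1) = M·Φ(n,m), where L = [[1,0],[p²/(u(n+1,m)-u(n,m)), 1]] and M = [[1,0],[q²/(u(n,m+1)-u(n,m)), 1]], is compatible: L(n,m+1)·M(n,m) = M(n+1,m)·L(n,m). -/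
/-- The Lax pair of Q1(0) is weak: it is compatible on solutions of the linear
equation u − ũ − û + ũ̂ = 0. -/
theorem stmt_14 {K : Type*} [Field K] (p q : K) (u : ℤ → ℤ → K)
    (hdn : ∀ n m : ℤ, u (n + 1) m - u n m ≠ 0)
    (hdm : ∀ n m : ℤ, u n (m + 1) - u n m ≠ 0)
    (hlin : ∀ n m : ℤ, u n m - u (n + 1) m - u n (m + 1) + u (n + 1) (m + 1) = 0) :
    ∀ n m : ℤ,
      (!![(1 : K), 0; p ^ 2 / (u (n + 1) (m + 1) - u n (m + 1)), 1]) *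
          (!![(1 : K), 0; q ^ 2 / (u n (m + 1) - u n m), 1]) =
        (!![(1 : K), 0; q ^ 2 / (u (n + 1) (m + 1) - u (n + 1) m), 1]) *
          (!![(1 : K), 0; p ^ 2 / (u (n + 1) m - u n m), 1]) := by
  intro n m
  have h := hlin n m
  have h1 : u (n + 1) (m + 1) - u n (m + 1) = u (n + 1) m - u n m := by linear_combination h
  have h2 : u (n + 1) (m + 1) - u (n + 1) m = u n (m + 1) - u n m := by linear_combination h
  rw [h1, h2]
  ext i j
  fin_cases i <;> fin_cases j <;>
    simp [Matrix.mul_apply, Fin.sum_univ_two] <;> ring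
end

section
/- Let u : ℤ × ℤ → K with all differences u(n+1,m)-u(n,m), u(n,m+1)-u(n,m) nonzero, and let L, M be the lower-triangular matrices L = [[1,0],[p²/(u(n+1,m)-u(n,m)),1]], M = [[1,0],[q²/(u(n,m+1)-u(n,m)),1]]. Then L(n,m+1)·M(n,m) = M(n+1,m)·L(n,m) holds if and only if (u - ũ - û + ũû)·[p²(u-û)(ũ-ũû) - q²(u-ũ)(û-ũû)] = 0, where ũ = u(n+1,m), û = u(n,m+1), ũû = u(n+1,m+1) (assuming also ũû - ũ ≠ 0 and ũû - û ≠ 0). -/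
lemma mul_lower (K : Type*) [Field K] (x y : K) :
    (!![(1 : K), 0; x, 1]) * (!![(1 : K), 0; y, 1]) = !![(1 : K), 0; x + y, 1] := by
  ext i j
  fin_cases i <;> fin_cases j <;>
    simp [Matrix.mul_apply, Fin.sum_univ_two]

/-- The compatibility of the 2×2 linear system L, M is equivalent to the product of the
linear equation u − ũ − û + ũ̂ = 0 and Q1(0) with parameters p², q²: a weak Lax pair. -/
theorem stmt_15 {K : Type*} [Field K] [CharZero K] (p q : K)
    (hp : p ≠ 0) (hq : q ≠ 0) (u : ℤ → ℤ → K)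
    (hdn : ∀ n m : ℤ, u (n + 1) m - u n m ≠ 0)
    (hdm : ∀ n m : ℤ, u n (m + 1) - u n m ≠ 0)
    (hdn' : ∀ n m : ℤ, u (n + 1) (m + 1) - u n (m + 1) ≠ 0)
    (hdm' : ∀ n m : ℤ, u (n + 1) (m + 1) - u (n + 1) m ≠ 0) :
    ∀ n m : ℤ,
      ((!![(1 : K), 0; p ^ 2 / (u (n + 1) (m + 1) - u n (m + 1)), 1]) *
            (!![(1 : K), 0; q ^ 2 / (u n (m + 1) - u n m), 1]) =
          (!![(1 : K), 0; q ^ 2 / (u (n + 1) (m + 1) - u (n + 1) m), 1]) *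
            (!![(1 : K), 0; p ^ 2 / (u (n + 1) m - u n m), 1]))
      ↔
      (u n m - u (n + 1) m - u n (m + 1) + u (n + 1) (m + 1)) *
          (p ^ 2 * (u n m - u n (m + 1)) * (u (n + 1) m - u (n + 1) (m + 1))
            - q ^ 2 * (u n m - u (n + 1) m) * (u n (m + 1) - u (n + 1) (m + 1))) = 0 := by
  intro n m
  have ha := hdn n m
  have hb := hdm n m
  have hc := hdn' n m
  have hd := hdm' n m
  rw [mul_lower, mul_lower]
  constructor
  · intro h
    have h21 : p ^ 2 / (u (n + 1) (m + 1) - u n (m + 1)) + q ^ 2 / (u n (m + 1) - u n m)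
        = q ^ 2 / (u (n + 1) (m + 1) - u (n + 1) m) + p ^ 2 / (u (n + 1) m - u n m) := by
      have := congrArg (fun M => M 1 0) h
      simpa using this
    field_simp at h21
    linear_combination -h21
  · intro h
    have h21 : p ^ 2 / (u (n + 1) (m + 1) - u n (m + 1)) + q ^ 2 / (u n (m + 1) - u n m)
        = q ^ 2 / (u (n + 1) (m + 1) - u (n + 1) m) + p ^ 2 / (u (n + 1) m - u n m) := by
      field_simp
      linear_combination -h
    rw [h21]
end

section
/- Suppose u, ū : ℤ × ℤ → K satisfy (ū(n+1,m) - ū(n,m))(u(n+1,m) - u(n,m)) = p² and (ū(n,m+1) - ū(n,m))(u(n,m+1) - u(n,m)) = q² for all n, m, with all differences nonzero. If u satisfies Q1(0): p²(u-û)(ũ-ũû) = q²(u-ũ)(û-ũû), then ū satisfies Q1(0) with the same parameters. -/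
/-- The auto-BT (ũ̄ − ū)(ũ − u) = p², (û̄ − ū)(û − u) = q² of Q1(0):
if u solves Q1(0) with parameters p², q², so does ū. -/
theorem stmt_16 {K : Type*} [Field K] (p q : K) (hp : p ≠ 0) (hq : q ≠ 0)
    (u ub : ℤ → ℤ → K)
    (hdn : ∀ n m : ℤ, u (n + 1) m - u n m ≠ 0)
    (hdm : ∀ n m : ℤ, u n (m + 1) - u n m ≠ 0)
    (hbdn : ∀ n m : ℤ, ub (n + 1) m - ub n m ≠ 0)
    (hbdm : ∀ n m : ℤ, ub n (m + 1) - ub n m ≠ 0)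
    (h1 : ∀ n m : ℤ, (ub (n + 1) m - ub n m) * (u (n + 1) m - u n m) = p ^ 2)
    (h2 : ∀ n m : ℤ, (ub n (m + 1) - ub n m) * (u n (m + 1) - u n m) = q ^ 2)
    (hQ : ∀ n m : ℤ,
      p ^ 2 * (u n m - u n (m + 1)) * (u (n + 1) m - u (n + 1) (m + 1)) =
        q ^ 2 * (u n m - u (n + 1) m) * (u n (m + 1) - u (n + 1) (m + 1))) :
    ∀ n m : ℤ,
      p ^ 2 * (ub n m - ub n (m + 1)) * (ub (n + 1) m - ub (n + 1) (m + 1)) =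
        q ^ 2 * (ub n m - ub (n + 1) m) * (ub n (m + 1) - ub (n + 1) (m + 1)) := by
  intro n m
  set a := u n m
  set b := u (n + 1) m
  set c := u n (m + 1)
  set d := u (n + 1) (m + 1)
  set A := ub n m
  set B := ub (n + 1) m
  set C := ub n (m + 1)
  set D := ub (n + 1) (m + 1)
  have hX : (c - a) * (d - b) * ((b - a) * (d - c)) ≠ 0 := by
    exact mul_ne_zero (mul_ne_zero (hdm n m) (hdm (n + 1) m))
      (mul_ne_zero (hdn n m) (hdn n (m + 1)))
  apply mul_right_cancel₀ hX
  have e1 := h1 n m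
  have e2 := h1 n (m + 1)
  have e3 := h2 n m
  have e4 := h2 (n + 1) m
  have e5 := hQ n m
  linear_combination
    (p ^ 2 * (b - a) * (d - c) * ((D - B) * (d - b))) * e3 +
    (p ^ 2 * (b - a) * (d - c) * q ^ 2) * e4 +
    (-(q ^ 2) * (c - a) * (d - b) * ((D - C) * (d - c))) * e1 +
    (-(q ^ 2) * (c - a) * (d - b) * p ^ 2) * e2 +
    (-(p ^ 2 * q ^ 2)) * e5
end

section
/- Suppose u, ū : ℤ × ℤ → K satisfy (u(n+1,m)·u(n,m) - p)(ū(n+1,m)·ū(n,m) - p) = (p·u(n+1,m)·u(n,m) - 1)(p·ū(n+1,m)·ū(n,m) - 1) and the analogous relation with shift in m and parameter q, for all n, m, with appropriate nondegeneracy (all factors p·uũ - 1, q·uû - 1 etc. nonzero). If u satisfies A2: p(1-q²)(uũ + ûũû) - q(1-p²)(uû + ũũû) - (p²-q²)(1 + uũûũû) = 0 for all n, m, then ū satisfies A2 with the same parameters. -/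
/-- The coupled system (uũ − p)(ūũ̄ − p) = (puũ − 1)(pūũ̄ − 1) (and analogously in the
m-direction with parameter q) is an auto-Bäcklund transformation of the ABS equation A2. -/
theorem stmt_17 {K : Type*} [Field K] [CharZero K] (p q : K)
    (hp : p ^ 2 ≠ 1) (hq : q ^ 2 ≠ 1) (hpq : p ≠ q) (hpq' : p ≠ -q)
    (u ub : ℤ → ℤ → K)
    (hnd1 : ∀ n m : ℤ, p * u (n + 1) m * u n m - 1 ≠ 0)
    (hnd2 : ∀ n m : ℤ, q * u n (m + 1) * u n m - 1 ≠ 0)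
    (hnd3 : ∀ n m : ℤ, p * ub (n + 1) m * ub n m - 1 ≠ 0)
    (hnd4 : ∀ n m : ℤ, q * ub n (m + 1) * ub n m - 1 ≠ 0)
    (h1 : ∀ n m : ℤ,
      (u (n + 1) m * u n m - p) * (ub (n + 1) m * ub n m - p) =
        (p * u (n + 1) m * u n m - 1) * (p * ub (n + 1) m * ub n m - 1))
    (h2 : ∀ n m : ℤ,
      (u n (m + 1) * u n m - q) * (ub n (m + 1) * ub n m - q) =
        (q * u n (m + 1) * u n m - 1) * (q * ub n (m + 1) * ub n m - 1))
    (hA2 : ∀ n m : ℤ,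
      p * (1 - q ^ 2) * (u n m * u (n + 1) m + u n (m + 1) * u (n + 1) (m + 1))
        - q * (1 - p ^ 2) * (u n m * u n (m + 1) + u (n + 1) m * u (n + 1) (m + 1))
        - (p ^ 2 - q ^ 2) *
            (1 + u n m * u (n + 1) m * u n (m + 1) * u (n + 1) (m + 1)) = 0) :
    ∀ n m : ℤ,
      p * (1 - q ^ 2) * (ub n m * ub (n + 1) m + ub n (m + 1) * ub (n + 1) (m + 1))
        - q * (1 - p ^ 2) * (ub n m * ub n (m + 1) + ub (n + 1) m * ub (n + 1) (m + 1))
        - (p ^ 2 - q ^ 2) *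
            (1 + ub n m * ub (n + 1) m * ub n (m + 1) * ub (n + 1) (m + 1)) = 0 := by
  intro n m
  have hp2 : (1 : K) - p ^ 2 ≠ 0 := by
    intro h; exact hp (by linear_combination -h)
  have hq2 : (1 : K) - q ^ 2 ≠ 0 := by
    intro h; exact hq (by linear_combination -h)
  -- the Bäcklund relations force the products to be inverse to each other
  have key1 : ∀ n m : ℤ, u (n + 1) m * u n m * (ub (n + 1) m * ub n m) = 1 := by
    intro n m
    have := h1 n m
    apply mul_left_cancel₀ hp2
    linear_combination this
  have key2 : ∀ n m : ℤ, u n (m + 1) * u n m * (ub n (m + 1) * ub n m) = 1 := by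
    intro n m
    have := h2 n m
    apply mul_left_cancel₀ hq2
    linear_combination this
  set a := u n m
  set b := u (n + 1) m
  set c := u n (m + 1)
  set d := u (n + 1) (m + 1)
  set A := ub n m
  set B := ub (n + 1) m
  set C := ub n (m + 1)
  set D := ub (n + 1) (m + 1)
  have E1 : b * a * (B * A) = 1 := key1 n m
  have E2 : d * c * (D * C) = 1 := key1 n (m + 1)
  have E3 : c * a * (C * A) = 1 := key2 n m
  have E4 : d * b * (D * B) = 1 := key2 (n + 1) m
  have hab : a * b ≠ 0 := by
    intro h
    have : b * a * (B * A) = 0 := by rw [mul_comm b a]; rw [h]; ring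
    rw [E1] at this; exact one_ne_zero this
  have hcd : c * d ≠ 0 := by
    intro h
    have : d * c * (D * C) = 0 := by rw [mul_comm d c]; rw [h]; ring
    rw [E2] at this; exact one_ne_zero this
  have habcd : a * b * (c * d) ≠ 0 := mul_ne_zero hab hcd
  apply mul_left_cancel₀ habcd
  rw [mul_zero]
  linear_combination hA2 n m + p * (1 - q ^ 2) * (c * d) * E1
    + p * (1 - q ^ 2) * (a * b) * E2 - q * (1 - p ^ 2) * (b * d) * E3
    - q * (1 - p ^ 2) * (a * c) * E4 - (p ^ 2 - q ^ 2) * (c * d * C * D) * E1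
    - (p ^ 2 - q ^ 2) * E2
end
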